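/- Let S be a distributive inverse semigroup, F a filter, and P a ∨-closed order ideal maximal among ∨-closed order ideals disjoint from F. Then P is a prime ∨-closed order ideal. Consequently, for b ≰ a in S there exists a prime filter containing b and omitting a. -/
import Mathlib


class InvSemigroup (S : Type*) extends Mul S, Inv S where
  mul_assoc : ∀ a b c : S, a * b * c = a * (b * c)
  mul_inv_mul : ∀ a : S, a * a⁻¹ * a = a
  inv_mul_inv : ∀ a : S, a⁻¹ * a * a⁻¹ = a⁻¹
  idem_comm : ∀ e f : S, e * e = e → f * f = f → e * f = f * e

/-- The natural partial order on an inverse semigroup: `a ≤ b` iff `a = b * (a⁻¹ * a)`. -/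
def nle {S : Type*} [InvSemigroup S] (a b : S) : Prop := a = b * (a⁻¹ * a)

def IsIdem {S : Type*} [Mul S] (e : S) : Prop := e * e = e

/-- Two elements are compatible if `a⁻¹ * b` and `a * b⁻¹` are idempotents. -/
def Compat {S : Type*} [InvSemigroup S] (a b : S) : Prop :=
  IsIdem (a⁻¹ * b) ∧ IsIdem (a * b⁻¹)

def PairwiseCompat {S : Type*} [InvSemigroup S] (X : Set S) : Prop :=
  ∀ a ∈ X, ∀ b ∈ X, Compat a b

/-- `s` is the join (least upper bound) of `X` with respect to the natural partial order. -/
def IsJoin {S : Type*} [InvSemigroup S] (X : Set S) (s : S) : Prop :=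
  (∀ a ∈ X, nle a s) ∧ ∀ u : S, (∀ a ∈ X, nle a u) → nle s u

/-- A distributive inverse semigroup: finite (binary) compatible joins exist and
multiplication distributes over them. -/
class DistInvSemigroup (S : Type*) extends InvSemigroup S where
  join2 : ∀ a b : S, Compat a b → ∃ j : S, IsJoin {a, b} j
  distl : ∀ a b j c : S, IsJoin {a, b} j → IsJoin {c * a, c * b} (c * j)
  distr : ∀ a b j c : S, IsJoin {a, b} j → IsJoin {a * c, b * c} (j * c)

def downSet {S : Type*} [InvSemigroup S] (a : S) : Set S := {x | nle x a}

def IsOrderIdeal {S : Type*} [InvSemigroup S] (A : Set S) : Prop :=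
  ∀ a ∈ A, ∀ x : S, nle x a → x ∈ A

class DistInvSemigroupWithZero (S : Type*) extends DistInvSemigroup S, Zero S where
  zero_mul : ∀ a : S, 0 * a = 0
  mul_zero : ∀ a : S, a * 0 = 0

/-- A (proper) filter. -/
def IsFilter0 {S : Type*} [DistInvSemigroupWithZero S] (F : Set S) : Prop :=
  F.Nonempty ∧ (∀ a ∈ F, ∀ b : S, nle a b → b ∈ F) ∧
    (∀ a ∈ F, ∀ b ∈ F, ∃ c ∈ F, nle c a ∧ nle c b) ∧ (0 : S) ∉ F

/-- A prime filter. -/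
def IsPrimeFilter0 {S : Type*} [DistInvSemigroupWithZero S] (F : Set S) : Prop :=
  IsFilter0 F ∧ ∀ a b j : S, IsJoin {a, b} j → j ∈ F → a ∈ F ∨ b ∈ F

/-- A ∨-closed order ideal. -/
def IsVIdeal {S : Type*} [DistInvSemigroupWithZero S] (P : Set S) : Prop :=
  IsOrderIdeal P ∧ ∀ a ∈ P, ∀ b ∈ P, ∀ j : S, IsJoin {a, b} j → j ∈ P

/-- A prime ∨-closed order ideal. -/
def IsPrimeVIdeal {S : Type*} [DistInvSemigroupWithZero S] (P : Set S) : Prop :=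
  IsVIdeal P ∧ ∀ a b : S, {x : S | nle x a ∧ nle x b} ⊆ P → a ∈ P ∨ b ∈ P

namespace Aux
variable {S : Type*} [InvSemigroup S]

instance : Semigroup S := ⟨InvSemigroup.mul_assoc⟩

lemma mim (a : S) : a * a⁻¹ * a = a := InvSemigroup.mul_inv_mul a
lemma imi (a : S) : a⁻¹ * a * a⁻¹ = a⁻¹ := InvSemigroup.inv_mul_inv a

lemma icomm {e f : S} (he : IsIdem e) (hf : IsIdem f) : e * f = f * e :=
  InvSemigroup.idem_comm e f he hf

lemma idem_mul {e f : S} (he : IsIdem e) (hf : IsIdem f) : IsIdem (e * f) := by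
  unfold IsIdem at *
  calc e * f * (e * f) = e * (f * e) * f := by simp [mul_assoc]
    _ = e * (e * f) * f := by rw [icomm hf he]
    _ = (e * e) * (f * f) := by simp [mul_assoc]
    _ = e * f := by rw [he, hf]

lemma idem_ii (a : S) : IsIdem (a⁻¹ * a) := by
  unfold IsIdem
  calc a⁻¹ * a * (a⁻¹ * a) = a⁻¹ * (a * a⁻¹ * a) := by simp [mul_assoc]
    _ = a⁻¹ * a := by rw [mim]

lemma idem_ii' (a : S) : IsIdem (a * a⁻¹) := by
  unfold IsIdem
  calc a * a⁻¹ * (a * a⁻¹) = a * (a⁻¹ * a * a⁻¹) := by simp [mul_assoc]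
    _ = a * a⁻¹ := by rw [imi]

lemma inv_unique {a x : S} (h1 : a * x * a = a) (h2 : x * a * x = x) : x = a⁻¹ := by
  have hxa : IsIdem (x * a) := by
    show x * a * (x * a) = x * a
    calc x * a * (x * a) = (x * a * x) * a := by simp [mul_assoc]
      _ = x * a := by rw [h2]
  have hax : IsIdem (a * x) := by
    show a * x * (a * x) = a * x
    calc a * x * (a * x) = (a * x * a) * x := by simp [mul_assoc]
      _ = a * x := by rw [h1]
  -- step1 : a⁻¹ * a = x * a
  have s1 : a⁻¹ * a = x * a := by
    calc a⁻¹ * a = a⁻¹ * (a * x * a) := by rw [h1]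
      _ = (a⁻¹ * a) * (x * a) := by simp [mul_assoc]
      _ = (x * a) * (a⁻¹ * a) := icomm (idem_ii a) hxa
      _ = x * (a * a⁻¹ * a) := by simp [mul_assoc]
      _ = x * a := by rw [mim]
  have s3 : a * a⁻¹ = a * x := by
    calc a * a⁻¹ = (a * x * a) * a⁻¹ := by rw [h1]
      _ = (a * x) * (a * a⁻¹) := by simp [mul_assoc]
      _ = (a * a⁻¹) * (a * x) := icomm hax (idem_ii' a)
      _ = (a * a⁻¹ * a) * x := by simp [mul_assoc]
      _ = a * x := by rw [mim]
  calc x = x * a * x := h2.symm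
    _ = (a⁻¹ * a) * x := by rw [s1]
    _ = a⁻¹ * (a * x) := by simp [mul_assoc]
    _ = a⁻¹ * (a * a⁻¹) := by rw [s3]
    _ = a⁻¹ * a * a⁻¹ := by simp [mul_assoc]
    _ = a⁻¹ := imi a

lemma inv_inv (a : S) : a⁻¹⁻¹ = a := (inv_unique (imi a) (mim a)).symm

lemma idem_inv {e : S} (he : IsIdem e) : e⁻¹ = e := by
  have h : e * e * e = e := by rw [he, he]
  exact (inv_unique h h).symm

lemma mul_inv_rev (a b : S) : (a * b)⁻¹ = b⁻¹ * a⁻¹ := by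
  refine (inv_unique ?_ ?_).symm
  · calc a * b * (b⁻¹ * a⁻¹) * (a * b)
        = a * ((b * b⁻¹) * (a⁻¹ * a)) * b := by simp [mul_assoc]
      _ = a * ((a⁻¹ * a) * (b * b⁻¹)) * b := by rw [icomm (idem_ii' b) (idem_ii a)]
      _ = (a * a⁻¹ * a) * (b * b⁻¹ * b) := by simp [mul_assoc]
      _ = a * b := by rw [mim, mim]
  · calc b⁻¹ * a⁻¹ * (a * b) * (b⁻¹ * a⁻¹)
        = b⁻¹ * ((a⁻¹ * a) * (b * b⁻¹)) * a⁻¹ := by simp [mul_assoc]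
      _ = b⁻¹ * ((b * b⁻¹) * (a⁻¹ * a)) * a⁻¹ := by rw [icomm (idem_ii a) (idem_ii' b)]
      _ = (b⁻¹ * b * b⁻¹) * (a⁻¹ * a * a⁻¹) := by simp [mul_assoc]
      _ = b⁻¹ * a⁻¹ := by rw [imi, imi]

lemma nle_iff {a b : S} : nle a b ↔ ∃ e : S, IsIdem e ∧ a = b * e := by
  constructor
  · intro h; exact ⟨a⁻¹ * a, idem_ii a, h⟩
  · rintro ⟨e, he, rfl⟩
    show b * e = b * ((b * e)⁻¹ * (b * e))
    have : (b * e)⁻¹ * (b * e) = b⁻¹ * b * e := by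
      calc (b * e)⁻¹ * (b * e) = e⁻¹ * b⁻¹ * (b * e) := by rw [mul_inv_rev]
        _ = e * (b⁻¹ * b) * e := by rw [idem_inv he]; simp [mul_assoc]
        _ = (b⁻¹ * b) * e * e := by rw [icomm he (idem_ii b)]
        _ = b⁻¹ * b * e := by rw [mul_assoc, he]
    rw [this]
    calc b * e = b * b⁻¹ * b * e := by rw [mim]
      _ = b * (b⁻¹ * b * e) := by simp [mul_assoc]

lemma nle_refl (a : S) : nle a a := by
  show a = a * (a⁻¹ * a); rw [← mul_assoc, mim]

lemma nle_trans {a b c : S} (h1 : nle a b) (h2 : nle b c) : nle a c := by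
  obtain ⟨e, he, rfl⟩ := nle_iff.mp h1
  obtain ⟨f, hf, rfl⟩ := nle_iff.mp h2
  exact nle_iff.mpr ⟨f * e, idem_mul hf he, by simp [mul_assoc]⟩

lemma nle_mul_idem {e : S} (a : S) (he : IsIdem e) : nle (a * e) a :=
  nle_iff.mpr ⟨e, he, rfl⟩

lemma nle_antisymm {a b : S} (h1 : nle a b) (h2 : nle b a) : a = b := by
  set e := a⁻¹ * a with hedef
  set f := b⁻¹ * b with hfdef
  have he : IsIdem e := idem_ii a
  have hf : IsIdem f := idem_ii b
  -- e = f * e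
  have s1 : e = f * e := by
    calc e = a⁻¹ * a := rfl
      _ = (b * e)⁻¹ * (b * e) := by rw [← h1]
      _ = e⁻¹ * b⁻¹ * (b * e) := by rw [mul_inv_rev]
      _ = e * f * e := by rw [idem_inv he]; simp [mul_assoc, hfdef]
      _ = f * e * e := by rw [icomm he hf]
      _ = f * e := by rw [mul_assoc, he]
  have s2 : f = e * f := by
    calc f = b⁻¹ * b := rfl
      _ = (a * f)⁻¹ * (a * f) := by rw [← h2]
      _ = f⁻¹ * a⁻¹ * (a * f) := by rw [mul_inv_rev]
      _ = f * e * f := by rw [idem_inv hf]; simp [mul_assoc, hedef]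
      _ = e * f * f := by rw [icomm hf he]
      _ = e * f := by rw [mul_assoc, hf]
  have hef : e = f := by
    calc e = f * e := s1
      _ = e * f := (icomm he hf).symm
      _ = f := s2.symm
  calc a = b * e := h1
    _ = b * f := by rw [hef]
    _ = b * (b⁻¹ * b) := rfl
    _ = b := by rw [← mul_assoc, mim]



lemma gg (g : S) : g * (g⁻¹ * g) = g := by rw [← mul_assoc, mim]

-- if u ≤ g then u * (g⁻¹ * g) = u
lemma mul_inv_self_of_nle {u g : S} (h : nle u g) : u * (g⁻¹ * g) = u := by
  obtain ⟨e, he, rfl⟩ := nle_iff.mp h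
  calc g * e * (g⁻¹ * g) = g * (e * (g⁻¹ * g)) := by simp [mul_assoc]
    _ = g * ((g⁻¹ * g) * e) := by rw [icomm he (idem_ii g)]
    _ = (g * (g⁻¹ * g)) * e := by simp [mul_assoc]
    _ = g * e := by rw [← mul_assoc, mim]

-- the key: for u, v ≤ g, u * (g⁻¹ * v) = u * (v⁻¹*v)-style elements
lemma ubmul_eq {u v g : S} (hu : nle u g) (hv : nle v g) :
    ∃ e f : S, IsIdem e ∧ IsIdem f ∧ u * (g⁻¹ * v) = u * f ∧ u * (g⁻¹ * v) = v * e := by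
  obtain ⟨e, he, hue⟩ := nle_iff.mp hu
  obtain ⟨f, hf, hvf⟩ := nle_iff.mp hv
  refine ⟨e, f, he, hf, ?_, ?_⟩
  · calc u * (g⁻¹ * v) = u * (g⁻¹ * (g * f)) := by rw [← hvf]
      _ = (u * (g⁻¹ * g)) * f := by simp [mul_assoc]
      _ = u * f := by rw [mul_inv_self_of_nle hu]
  · calc u * (g⁻¹ * v) = (g * e) * (g⁻¹ * (g * f)) := by rw [← hue, ← hvf]
      _ = g * (e * (g⁻¹ * g)) * f := by simp [mul_assoc]
      _ = g * ((g⁻¹ * g) * e) * f := by rw [icomm he (idem_ii g)]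
      _ = (g * (g⁻¹ * g)) * (e * f) := by simp [mul_assoc]
      _ = g * (e * f) := by rw [gg]
      _ = g * (f * e) := by rw [icomm he hf]
      _ = (g * f) * e := by simp [mul_assoc]
      _ = v * e := by rw [← hvf]

lemma ubmul_nle_left {u v g : S} (hu : nle u g) (hv : nle v g) : nle (u * (g⁻¹ * v)) u := by
  obtain ⟨e, f, he, hf, h1, h2⟩ := ubmul_eq hu hv
  rw [h1]; exact nle_mul_idem u hf

lemma ubmul_nle_right {u v g : S} (hu : nle u g) (hv : nle v g) : nle (u * (g⁻¹ * v)) v := by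
  obtain ⟨e, f, he, hf, h1, h2⟩ := ubmul_eq hu hv
  rw [h2]; exact nle_mul_idem v he

lemma compat_of_ub {u v g : S} (hu : nle u g) (hv : nle v g) : Compat u v := by
  obtain ⟨e, he, hue⟩ := nle_iff.mp hu
  obtain ⟨f, hf, hvf⟩ := nle_iff.mp hv
  constructor
  · have : u⁻¹ * v = e * (g⁻¹ * g) * f := by
      calc u⁻¹ * v = (g * e)⁻¹ * (g * f) := by rw [← hue, ← hvf]
        _ = e⁻¹ * g⁻¹ * (g * f) := by rw [mul_inv_rev]
        _ = e * (g⁻¹ * g) * f := by rw [idem_inv he]; simp [mul_assoc]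
    rw [this]
    exact idem_mul (idem_mul he (idem_ii g)) hf
  · have key : u * v⁻¹ = g * (e * f) * g⁻¹ := by
      calc u * v⁻¹ = (g * e) * (g * f)⁻¹ := by rw [← hue, ← hvf]
        _ = g * e * (f⁻¹ * g⁻¹) := by rw [mul_inv_rev]
        _ = g * (e * f) * g⁻¹ := by rw [idem_inv hf]; simp [mul_assoc]
    rw [key]
    have hef : IsIdem (e * f) := idem_mul he hf
    show g * (e * f) * g⁻¹ * (g * (e * f) * g⁻¹) = g * (e * f) * g⁻¹
    calc g * (e * f) * g⁻¹ * (g * (e * f) * g⁻¹)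
        = g * ((e * f) * (g⁻¹ * g)) * ((e * f) * g⁻¹) := by simp [mul_assoc]
      _ = g * ((g⁻¹ * g) * (e * f)) * ((e * f) * g⁻¹) := by rw [icomm hef (idem_ii g)]
      _ = (g * (g⁻¹ * g)) * ((e * f) * (e * f)) * g⁻¹ := by simp [mul_assoc]
      _ = g * ((e * f) * (e * f)) * g⁻¹ := by rw [gg]
      _ = g * (e * f) * g⁻¹ := by rw [hef]


variable {S : Type*} [InvSemigroup S]

lemma isJoin_pair {a b j : S} :
    IsJoin {a, b} j ↔ nle a j ∧ nle b j ∧ ∀ u, nle a u → nle b u → nle j u := by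
  constructor
  · rintro ⟨h1, h2⟩
    exact ⟨h1 a (by simp), h1 b (by simp), fun u hau hbu =>
      h2 u (by rintro x (rfl | rfl) <;> assumption)⟩
  · rintro ⟨h1, h2, h3⟩
    exact ⟨by rintro x (rfl | rfl) <;> assumption,
      fun u hu => h3 u (hu a (by simp)) (hu b (by simp))⟩

variable {T : Type*} [DistInvSemigroupWithZero T]

lemma zero_inv : ((0 : T))⁻¹ = 0 := by
  refine (inv_unique ?_ ?_).symm <;>
    simp [DistInvSemigroupWithZero.mul_zero]

lemma nle_zero (a : T) : nle (0 : T) a := by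
  show (0 : T) = a * ((0:T)⁻¹ * 0)
  rw [zero_inv, DistInvSemigroupWithZero.mul_zero, DistInvSemigroupWithZero.mul_zero]

lemma eq_zero_of_nle_zero {x : T} (h : nle x (0 : T)) : x = 0 := by
  rw [h, DistInvSemigroupWithZero.zero_mul]

lemma isJoin_pair_zero (p : T) : IsJoin {p, (0:T)} p :=
  isJoin_pair.mpr ⟨nle_refl p, nle_zero p, fun u h1 _ => h1⟩

lemma isJoin_zero_pair (c : T) : IsJoin {(0:T), c} c :=
  isJoin_pair.mpr ⟨nle_zero c, nle_refl c, fun u _ h2 => h2⟩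

end Aux

open Aux

/-- If `P` is a ∨-closed order ideal maximal among those disjoint from a filter `F`,
then `P` is prime; consequently, for `b ≰ a` there is a prime filter containing `b`
and omitting `a`. -/
theorem stmt16 {S : Type*} [DistInvSemigroupWithZero S] :
    (∀ F P : Set S, IsFilter0 F → IsVIdeal P → (∀ x ∈ P, x ∉ F) →
      (∀ Q : Set S, IsVIdeal Q → (∀ x ∈ Q, x ∉ F) → P ⊆ Q → Q = P) →
      IsPrimeVIdeal P) ∧
    (∀ a b : S, ¬ nle b a → ∃ F : Set S, IsPrimeFilter0 F ∧ b ∈ F ∧ a ∉ F) := by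
  have part1 : ∀ F P : Set S, IsFilter0 F → IsVIdeal P → (∀ x ∈ P, x ∉ F) →
      (∀ Q : Set S, IsVIdeal Q → (∀ x ∈ Q, x ∉ F) → P ⊆ Q → Q = P) →
      IsPrimeVIdeal P := by
    intro F P hF hP hdisj hmax
    obtain ⟨hFne, hFup, hFdir, hF0⟩ := hF
    obtain ⟨hPord, hPjoin⟩ := hP
    -- 0 ∈ P
    have h0P : (0 : S) ∈ P := by
      have hQ : IsVIdeal (insert (0:S) P) := by
        constructor
        · rintro q (rfl | hq) x hx
          · exact Or.inl (eq_zero_of_nle_zero hx)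
          · exact Or.inr (hPord q hq x hx)
        · rintro u (rfl | hu) v (rfl | hv) j hj
          · left
            exact nle_antisymm ((isJoin_pair.mp hj).2.2 0 (nle_refl 0) (nle_refl 0))
              ((isJoin_pair.mp hj).1)
          · right
            have : j = v := nle_antisymm
              ((isJoin_pair.mp hj).2.2 v (nle_zero v) (nle_refl v))
              ((isJoin_pair.mp hj).2.1)
            rwa [this]
          · right
            have : j = u := nle_antisymm
              ((isJoin_pair.mp hj).2.2 u (nle_refl u) (nle_zero u))
              ((isJoin_pair.mp hj).1)
            rwa [this]
          · exact Or.inr (hPjoin u hu v hv j hj)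
      have hQdisj : ∀ x ∈ insert (0:S) P, x ∉ F := by
        rintro x (rfl | hx)
        · exact hF0
        · exact hdisj x hx
      have := hmax _ hQ hQdisj (Set.subset_insert _ _)
      rw [← this]; exact Set.mem_insert _ _
    refine ⟨⟨hPord, hPjoin⟩, ?_⟩
    intro a b hsub
    by_contra hcon
    push_neg at hcon
    obtain ⟨haP, hbP⟩ := hcon
    -- the ∨-ideal generated by P and c
    set D : S → Set S := fun c => {z | ∃ p ∈ P, ∃ x, nle x c ∧ IsJoin {p, x} z} with hD
    have hDideal : ∀ c, IsVIdeal (D c) := by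
      intro c
      constructor
      · rintro z ⟨p, hp, x, hx, hj⟩ w hw
        have he : IsIdem (w⁻¹ * w) := idem_ii w
        have hjj := DistInvSemigroup.distr p x z (w⁻¹ * w) hj
        rw [← hw] at hjj
        exact ⟨p * (w⁻¹ * w), hPord p hp _ (nle_mul_idem p he), x * (w⁻¹ * w),
          nle_trans (nle_mul_idem x he) hx, hjj⟩
      · rintro z1 ⟨p1, hp1, x1, hx1, hj1⟩ z2 ⟨p2, hp2, x2, hx2, hj2⟩ j hj
        obtain ⟨hz1j, hz2j, hjle⟩ := isJoin_pair.mp hj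
        obtain ⟨hp1z, hx1z, hz1l⟩ := isJoin_pair.mp hj1
        obtain ⟨hp2z, hx2z, hz2l⟩ := isJoin_pair.mp hj2
        have hp1j : nle p1 j := nle_trans hp1z hz1j
        have hp2j : nle p2 j := nle_trans hp2z hz2j
        have hx1j : nle x1 j := nle_trans hx1z hz1j
        have hx2j : nle x2 j := nle_trans hx2z hz2j
        obtain ⟨p, hpj⟩ := DistInvSemigroup.join2 p1 p2 (compat_of_ub hp1j hp2j)
        obtain ⟨x, hxj⟩ := DistInvSemigroup.join2 x1 x2 (compat_of_ub hx1j hx2j)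
        obtain ⟨hp1p, hp2p, hpl⟩ := isJoin_pair.mp hpj
        obtain ⟨hx1x, hx2x, hxl⟩ := isJoin_pair.mp hxj
        refine ⟨p, hPjoin p1 hp1 p2 hp2 p hpj, x, hxl c hx1 hx2, ?_⟩
        refine isJoin_pair.mpr ⟨hpl j hp1j hp2j, hxl j hx1j hx2j, ?_⟩
        intro u hpu hxu
        exact hjle u (hz1l u (nle_trans hp1p hpu) (nle_trans hx1x hxu))
          (hz2l u (nle_trans hp2p hpu) (nle_trans hx2x hxu))
    have hPsubD : ∀ c, P ⊆ D c := by
      intro c p hp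
      exact ⟨p, hp, 0, nle_zero c, isJoin_pair_zero p⟩
    have hcD : ∀ c, c ∈ D c := fun c => ⟨0, h0P, c, nle_refl c, isJoin_zero_pair c⟩
    -- D a and D b must meet F
    have hmeet : ∀ c, c ∉ P → ∃ g ∈ F, g ∈ D c := by
      intro c hc
      by_contra hcon2
      push_neg at hcon2
      have : D c = P := hmax (D c) (hDideal c) (fun x hx hxF => hcon2 x hxF hx) (hPsubD c)
      exact hc (this ▸ hcD c)
    obtain ⟨fa, hfaF, p1, hp1, x1, hx1, hj1⟩ := hmeet a haP
    obtain ⟨fb, hfbF, p2, hp2, x2, hx2, hj2⟩ := hmeet b hbP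
    obtain ⟨g, hgF, hgfa, hgfb⟩ := hFdir fa hfaF fb hfbF
    have he : IsIdem (g⁻¹ * g) := idem_ii g
    -- restrict everything below g
    have hj1' : IsJoin {p1 * (g⁻¹ * g), x1 * (g⁻¹ * g)} g := by
      have := DistInvSemigroup.distr p1 x1 fa (g⁻¹ * g) hj1
      rwa [← hgfa] at this
    have hj2' : IsJoin {p2 * (g⁻¹ * g), x2 * (g⁻¹ * g)} g := by
      have := DistInvSemigroup.distr p2 x2 fb (g⁻¹ * g) hj2
      rwa [← hgfb] at this
    set p1' := p1 * (g⁻¹ * g) with hp1'def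
    set x1' := x1 * (g⁻¹ * g) with hx1'def
    set p2' := p2 * (g⁻¹ * g) with hp2'def
    set x2' := x2 * (g⁻¹ * g) with hx2'def
    have hp1'P : p1' ∈ P := hPord p1 hp1 _ (nle_mul_idem p1 he)
    have hp2'P : p2' ∈ P := hPord p2 hp2 _ (nle_mul_idem p2 he)
    have hx1'a : nle x1' a := nle_trans (nle_mul_idem x1 he) hx1
    have hx2'b : nle x2' b := nle_trans (nle_mul_idem x2 he) hx2
    obtain ⟨hp1'g, hx1'g, _⟩ := isJoin_pair.mp hj1'
    obtain ⟨hp2'g, hx2'g, _⟩ := isJoin_pair.mp hj2'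
    -- decompose x1'
    have step1 : IsJoin {g⁻¹ * p2', g⁻¹ * x2'} (g⁻¹ * g) :=
      DistInvSemigroup.distl _ _ _ g⁻¹ hj2'
    have step2 : IsJoin {x1' * (g⁻¹ * p2'), x1' * (g⁻¹ * x2')} x1' := by
      have := DistInvSemigroup.distl _ _ _ x1' step1
      rwa [mul_inv_self_of_nle hx1'g] at this
    have hm1 : x1' * (g⁻¹ * p2') ∈ P :=
      hPord p2' hp2'P _ (ubmul_nle_right hx1'g hp2'g)
    have hm2 : x1' * (g⁻¹ * x2') ∈ P := by
      apply hsub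
      exact ⟨nle_trans (ubmul_nle_left hx1'g hx2'g) hx1'a,
        nle_trans (ubmul_nle_right hx1'g hx2'g) hx2'b⟩
    have hx1'P : x1' ∈ P := hPjoin _ hm1 _ hm2 x1' step2
    have hgP : g ∈ P := hPjoin _ hp1'P _ hx1'P g hj1'
    exact hdisj g hgP hgF
  refine ⟨part1, ?_⟩
  intro a b hba
  set F : Set S := {x | nle b x} with hFdef
  have hbF : b ∈ F := nle_refl b
  have hFfil : IsFilter0 F := by
    refine ⟨⟨b, hbF⟩, ?_, ?_, ?_⟩
    · intro u hu v huv; exact nle_trans hu huv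
    · intro u hu v hv; exact ⟨b, hbF, hu, hv⟩
    · intro h0
      have : b = 0 := by rw [h0, DistInvSemigroupWithZero.zero_mul]
      exact hba (this ▸ nle_zero a)
  set 𝒮 : Set (Set S) := {Q | IsVIdeal Q ∧ (∀ x ∈ Q, x ∉ F) ∧ downSet a ⊆ Q} with h𝒮
  have hdownS : downSet a ∈ 𝒮 := by
    refine ⟨⟨?_, ?_⟩, ?_, le_refl _⟩
    · intro u hu x hx; exact nle_trans hx hu
    · intro u hu v hv j hj
      exact (isJoin_pair.mp hj).2.2 a hu hv
    · intro x hx hxF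
      exact hba (nle_trans hxF hx)
  have hzorn : ∀ c ⊆ 𝒮, IsChain (· ⊆ ·) c → c.Nonempty → ∃ ub ∈ 𝒮, ∀ s ∈ c, s ⊆ ub := by
    intro c hc𝒮 hchain hcne
    refine ⟨⋃₀ c, ⟨⟨?_, ?_⟩, ?_, ?_⟩, fun s hs => Set.subset_sUnion_of_mem hs⟩
    · rintro u ⟨Q, hQ, hu⟩ x hx
      exact ⟨Q, hQ, ((hc𝒮 hQ).1).1 u hu x hx⟩
    · rintro u ⟨Q1, hQ1, hu⟩ v ⟨Q2, hQ2, hv⟩ j hj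
      rcases hchain.total hQ1 hQ2 with h | h
      · exact ⟨Q2, hQ2, ((hc𝒮 hQ2).1).2 u (h hu) v hv j hj⟩
      · exact ⟨Q1, hQ1, ((hc𝒮 hQ1).1).2 u hu v (h hv) j hj⟩
    · rintro x ⟨Q, hQ, hx⟩
      exact (hc𝒮 hQ).2.1 x hx
    · obtain ⟨Q0, hQ0⟩ := hcne
      exact (hc𝒮 hQ0).2.2.trans (Set.subset_sUnion_of_mem hQ0)
  obtain ⟨P, hdP, hPmax⟩ := zorn_subset_nonempty 𝒮 hzorn _ hdownS
  obtain ⟨⟨hPvi, hPdisj, hPda⟩, hPm⟩ := hPmax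
  have hmax' : ∀ Q : Set S, IsVIdeal Q → (∀ x ∈ Q, x ∉ F) → P ⊆ Q → Q = P := by
    intro Q hQvi hQdisj hPQ
    exact Set.Subset.antisymm (hPm ⟨hQvi, hQdisj, hPda.trans hPQ⟩ hPQ) hPQ
  have hprime := part1 F P hFfil hPvi hPdisj hmax'
  refine ⟨Pᶜ, ⟨⟨⟨b, fun hb => hPdisj b hb hbF⟩, ?_, ?_, ?_⟩, ?_⟩, fun hb => hPdisj b hb hbF, ?_⟩
  · intro u hu v huv hvP
    exact hu (hprime.1.1 v hvP u huv)
  · intro u hu v hv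
    have : ¬ ({x : S | nle x u ∧ nle x v} ⊆ P) := by
      intro hss
      rcases hprime.2 u v hss with h | h
      · exact hu h
      · exact hv h
    rw [Set.not_subset] at this
    obtain ⟨c, ⟨hcu, hcv⟩, hcP⟩ := this
    exact ⟨c, hcP, hcu, hcv⟩
  · intro h0
    exact h0 (hPda (nle_zero a))
  · intro u v j hj hjP
    by_contra hcon
    push_neg at hcon
    simp only [Set.mem_compl_iff, not_not] at hcon
    exact hjP (hprime.1.2 u hcon.1 v hcon.2 j hj)
  · intro haP
    exact haP (hPda (nle_refl a))
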